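/- Let n ≥ 0, N = 2^n, and let G_N = P_π · (G_2^{⊗n}) over 𝔽₂ = ZMod 2 for a permutation matrix P_π. Then every linear code C ⊆ 𝔽₂^N of dimension K can be represented as a modified G_N-coset code: there exist a subset A of {1,…,N} with |A| = K and coefficients v_{j,i} ∈ 𝔽₂ (for j ∈ A, i ∉ A, j < i) such that C = { u · G_N : u ∈ 𝔽₂^N, and for every i ∉ A, u_i = Σ_{j ∈ A, j < i} v_{j,i} · u_j }. -/

import Mathlib

/-- Arıkan's polar transform kernel `G₂ = [[1,0],[1,1]]` over `𝔽₂`. -/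
def G2 : Matrix (Fin 2) (Fin 2) (ZMod 2) := !![1, 0; 1, 1]

/-- The `n`-fold Kronecker power `G₂^{⊗n}` over `𝔽₂`. -/
def kronPow : (n : ℕ) → Matrix (Fin (2 ^ n)) (Fin (2 ^ n)) (ZMod 2)
  | 0 => 1
  | n + 1 =>
    Matrix.reindex
      (finProdFinEquiv.trans (finCongr (by rw [pow_succ]; ring)))
      (finProdFinEquiv.trans (finCongr (by rw [pow_succ]; ring)))
      (Matrix.kroneckerMap (· * ·) G2 (kronPow n))

/-- The permutation matrix `P_π` over `𝔽₂`: `(P_π)_{i,j} = 1` iff `j = π i`. -/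
def permMatrix {N : ℕ} (π : Equiv.Perm (Fin N)) : Matrix (Fin N) (Fin N) (ZMod 2) :=
  Matrix.of fun i j => if j = π i then 1 else 0

/-- The set of vectors of `𝔽₂^N` satisfying 'dynamic frozen bit' constraints:
coordinates in `A` are free and each coordinate `i ∉ A` equals
`∑_{j ∈ A, j < i} v j i * u j`. -/
def dynFrozenSet {N : ℕ} (A : Finset (Fin N)) (v : Fin N → Fin N → ZMod 2) :
    Set (Fin N → ZMod 2) :=
  {u : Fin N → ZMod 2 | ∀ i ∉ A, u i = ∑ j ∈ A.filter (fun j => j < i), v j i * u j}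

/-!
Both `P_π` and `G₂^{⊗n}` have unit determinant, so `u ↦ u · G_N` is a linear automorphism of
`𝔽₂^N` and `C` is the image of a subspace `W` of the same dimension. Take `A` to be the set of
pivots of `W`: the positions at which some vector of `W` has its leading nonzero entry.
Restriction to `A` is an isomorphism `W ≃ 𝔽₂^A`: it is injective because a nonzero vector
vanishing on `A` would have its leading entry off `A`, and surjective because the vectors with
leading entries at the pivots restrict to a triangular matrix. Hence `|A| = dim W`, and each
coordinate `u i` of `u ∈ W` is a combination of the pivot coordinates `u j`. For `i ∉ A` only
pivots `j < i` occur: the vector of `W` that is the indicator of `j` on `A` vanishes on the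
pivots below `i`, hence also at `i`.
-/

namespace Submodule

variable {K ι : Type*} [Field K] [Fintype ι] [LinearOrder ι] (W : Submodule K (ι → K))

open scoped Classical in
noncomputable def pivots : Finset ι := {i | ∃ u ∈ W, u i ≠ 0 ∧ ∀ j < i, u j = 0}

variable {W}

lemma mem_pivots {i : ι} : i ∈ W.pivots ↔ ∃ u ∈ W, u i ≠ 0 ∧ ∀ j < i, u j = 0 := by
  simp [pivots]

lemma apply_eq_zero_of_notMem_pivots {u : ι → K} (hu : u ∈ W) {i : ι} (hi : i ∉ W.pivots)
    (h : ∀ j ∈ W.pivots, j < i → u j = 0) : u i = 0 := by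
  classical
  by_contra hui
  obtain ⟨m, hm, hmin⟩ := (Finset.univ.filter (u · ≠ 0)).exists_min_image id ⟨i, by simpa⟩
  simp only [Finset.mem_filter, Finset.mem_univ, true_and, id] at hm hmin
  have hm_pivot : m ∈ W.pivots :=
    mem_pivots.2 ⟨u, hu, hm, fun j hj => by_contra fun hj' => (hmin j hj').not_gt hj⟩
  rcases (hmin i hui).lt_or_eq with hlt | rfl
  · exact hm (h m hm_pivot hlt)
  · exact hi hm_pivot

variable (W)

def restrictPivots : W →ₗ[K] W.pivots → K :=
  (LinearMap.funLeft K K Subtype.val).comp W.subtype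

lemma restrictPivots_injective : Function.Injective W.restrictPivots := by
  refine (injective_iff_map_eq_zero _).2 fun u hu => Subtype.ext (funext fun i => ?_)
  by_cases hi : i ∈ W.pivots
  · exact congrFun hu ⟨i, hi⟩
  · exact apply_eq_zero_of_notMem_pivots u.2 hi fun j hj _ => congrFun hu ⟨j, hj⟩

/-- Vectors of `W` with leading positions `a ∈ W.pivots`, restricted to the pivots, form an upper
triangular matrix with nonzero diagonal. -/
lemma restrictPivots_surjective : Function.Surjective W.restrictPivots := by
  classical
  choose g hgW hg_ne hg_zero using fun a : W.pivots => mem_pivots.1 a.2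
  let M : Matrix W.pivots W.pivots K := fun a b => g a b
  have hM : IsUnit M := by
    have hM_upper : M.IsUpperTriangular := fun a b hba => hg_zero a b hba
    rw [Matrix.isUnit_iff_isUnit_det, Matrix.det_of_isUpperTriangular hM_upper]
    exact isUnit_iff_ne_zero.2 (Finset.prod_ne_zero_iff.2 fun a _ => hg_ne a)
  intro t
  obtain ⟨c, rfl⟩ := Matrix.vecMul_surjective_iff_isUnit.2 hM t
  refine ⟨⟨∑ a, c a • g a, sum_mem fun a _ => smul_mem _ _ (hgW a)⟩, funext fun b => ?_⟩
  simp [restrictPivots, Matrix.vecMul, dotProduct, M]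

noncomputable def pivotEquiv : W ≃ₗ[K] W.pivots → K :=
  .ofBijective W.restrictPivots ⟨W.restrictPivots_injective, W.restrictPivots_surjective⟩

lemma card_pivots : W.pivots.card = Module.finrank K W := by
  rw [W.pivotEquiv.finrank_eq, Module.finrank_fintype_fun_eq_card, Fintype.card_coe]

noncomputable def pivotBasis : Module.Basis W.pivots K W := .ofEquivFun W.pivotEquiv

lemma pivotBasis_apply_pivot (a b : W.pivots) :
    (W.pivotBasis a : ι → K) b = (Pi.single a 1 : W.pivots → K) b := by
  rw [pivotBasis, Module.Basis.coe_ofEquivFun]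
  exact congrFun (W.pivotEquiv.apply_symm_apply (Pi.single a 1)) b

lemma pivotBasis_apply_eq_zero (a : W.pivots) {i : ι} (hi : i ∉ W.pivots) (hai : ¬ a.1 < i) :
    (W.pivotBasis a : ι → K) i = 0 := by
  refine apply_eq_zero_of_notMem_pivots (W.pivotBasis a).2 hi fun j hj hji => ?_
  rw [W.pivotBasis_apply_pivot a ⟨j, hj⟩, Pi.single_eq_of_ne]
  exact fun h => hai (h ▸ hji)

@[simp]
lemma pivotBasis_repr_apply (u : W) (a : W.pivots) : W.pivotBasis.repr u a = (u : ι → K) a :=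
  rfl

lemma mem_iff_eq_sum_pivotBasis {u : ι → K} :
    u ∈ W ↔ ∀ i, u i = ∑ a : W.pivots, u a * (W.pivotBasis a : ι → K) i := by
  constructor
  · intro hu i
    have := congrArg (fun x : W => (x : ι → K) i) (W.pivotBasis.sum_repr ⟨u, hu⟩)
    simpa [Finset.sum_apply] using this.symm
  · intro h
    have hu : u = ∑ a : W.pivots, u a • (W.pivotBasis a : ι → K) := by
      ext i
      simpa [Finset.sum_apply] using h i
    rw [hu]
    exact sum_mem fun a _ => smul_mem _ _ (W.pivotBasis a).2

/-- The coefficient of `u j` in the expansion of `u i` over the pivot coordinates of `u ∈ W`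
(and `0` when `j` is not a pivot). -/
noncomputable def pivotCoeff (j i : ι) : K :=
  if h : j ∈ W.pivots then (W.pivotBasis ⟨j, h⟩ : ι → K) i else 0

lemma sum_pivotCoeff_mul (u : ι → K) {i : ι} (hi : i ∉ W.pivots) :
    ∑ j ∈ W.pivots with j < i, W.pivotCoeff j i * u j =
      ∑ a : W.pivots, u a * (W.pivotBasis a : ι → K) i := by
  rw [Finset.sum_filter_of_ne, ← Finset.sum_coe_sort]
  · exact Finset.sum_congr rfl fun a _ => by simp [pivotCoeff, mul_comm]
  · intro j hj hne
    by_contra hji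
    simp [pivotCoeff, hj, W.pivotBasis_apply_eq_zero ⟨j, hj⟩ hi hji] at hne

theorem mem_iff_forall_notMem_pivots {u : ι → K} :
    u ∈ W ↔ ∀ i ∉ W.pivots, u i = ∑ j ∈ W.pivots with j < i, W.pivotCoeff j i * u j := by
  rw [mem_iff_eq_sum_pivotBasis]
  refine forall_congr' fun i => ?_
  by_cases hi : i ∈ W.pivots
  · simp [hi, W.pivotBasis_apply_pivot _ ⟨i, hi⟩, Pi.single_apply]
  · simp [hi, W.sum_pivotCoeff_mul]

end Submodule

open Matrix in
lemma Submodule.exists_coe_eq_image_vecMul {K ι : Type*} [Field K] [Fintype ι] [DecidableEq ι]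
    {G : Matrix ι ι K} (hG : IsUnit G) (C : Submodule K (ι → K)) :
    ∃ W : Submodule K (ι → K), Module.finrank K W = Module.finrank K C ∧
      (C : Set (ι → K)) = {c | ∃ u ∈ W, c = u ᵥ* G} := by
  have hbij : Function.Bijective G.vecMulLinear := by
    rw [coe_vecMulLinear]
    exact ⟨vecMul_injective_iff_isUnit.2 hG, vecMul_surjective_iff_isUnit.2 hG⟩
  let e : (ι → K) ≃ₗ[K] ι → K := .ofBijective G.vecMulLinear hbij
  refine ⟨C.map e.symm.toLinearMap, e.symm.finrank_map_eq C, Set.ext fun c => ⟨fun hc => ?_, ?_⟩⟩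
  · exact ⟨e.symm c, mem_map_of_mem hc, (e.apply_symm_apply c).symm⟩
  · rintro ⟨u, hu, rfl⟩
    simpa [e, mem_map_equiv] using hu

lemma dynFrozenSet_pivots {N : ℕ} (W : Submodule (ZMod 2) (Fin N → ZMod 2)) :
    dynFrozenSet W.pivots W.pivotCoeff = W :=
  Set.ext fun _ => W.mem_iff_forall_notMem_pivots.symm

lemma det_kronPow (n : ℕ) : (kronPow n).det = 1 := by
  induction n with
  | zero => simp [kronPow]
  | succ n ih =>
    have hG2 : G2.det = 1 := by simp [G2, Matrix.det_fin_two_of]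
    rw [kronPow, Matrix.det_reindex_self, Matrix.det_kronecker, hG2, ih, one_pow, one_pow, one_mul]

lemma permMatrix_eq_permMatrix {N : ℕ} (π : Equiv.Perm (Fin N)) :
    permMatrix π = Equiv.Perm.permMatrix (ZMod 2) π := by
  ext i j
  simp [permMatrix, Equiv.Perm.permMatrix, PEquiv.toMatrix_apply, eq_comm]

lemma isUnit_det_permMatrix {N : ℕ} (π : Equiv.Perm (Fin N)) : IsUnit (permMatrix π).det := by
  rw [permMatrix_eq_permMatrix, Matrix.det_permutation]
  exact (Equiv.Perm.sign π).isUnit.map (Int.castRingHom (ZMod 2))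

/-- Every `K`-dimensional linear code `C ⊆ 𝔽₂^N` (`N = 2^n`) is a modified
`G_N`-coset code: with `G_N = P_π · G₂^{⊗n}`, there are a size-`K` information
set `A` and dynamic-frozen-bit coefficients `v` such that `C` is exactly the
image under `u ↦ u · G_N` of the vectors satisfying the dynamic frozen bit
constraints. -/
theorem linear_code_is_modified_coset_code (n K : ℕ)
    (π : Equiv.Perm (Fin (2 ^ n)))
    (C : Submodule (ZMod 2) (Fin (2 ^ n) → ZMod 2))
    (hC : Module.finrank (ZMod 2) C = K) :
    ∃ (A : Finset (Fin (2 ^ n))) (v : Fin (2 ^ n) → Fin (2 ^ n) → ZMod 2),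
      A.card = K ∧
      (C : Set (Fin (2 ^ n) → ZMod 2)) =
        {c : Fin (2 ^ n) → ZMod 2 | ∃ u ∈ dynFrozenSet A v,
          c = Matrix.vecMul u (permMatrix π * kronPow n)} := by
  have hG : IsUnit (permMatrix π * kronPow n) := by
    rw [Matrix.isUnit_iff_isUnit_det, Matrix.det_mul, det_kronPow, mul_one]
    exact isUnit_det_permMatrix π
  obtain ⟨W, hW, hCW⟩ := C.exists_coe_eq_image_vecMul hG
  refine ⟨W.pivots, W.pivotCoeff, by rw [W.card_pivots, hW, hC], ?_⟩
  simpa only [dynFrozenSet_pivots, SetLike.mem_coe] using hCW
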